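/- arXiv:1407.2706 — 3 statements merged into one kernel-verified Lean document; each statement's English description precedes it below -/
import Mathlib

section
/- Fix k ≠ 0 and the antilinear involution ρ of g_k determined by ρ(C)=-C, ρ(Z) = (i k̄/|k|) Z. The fixed-point real Lie superalgebra g_k^ρ is spanned over ℝ by C' = iC and Z' = bZ where b ∈ ℂ satisfies b/b̄ = i k̄/|k|, and its brackets are [C',C']=[C',Z']=0, [Z',Z'] = -2|b|²|k| C'. Any two such real forms (for different admissible b and k ≠ 0) are isomorphic over ℝ. -/
/-!
Write `w = i k̄/|k|`; admissibility of `b` says `b = w b̄`. Then `w z̄ = z` holds exactly when `z / b`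
is real, which describes the odd part of the fixed-point set; the even part is the case `w = -1`,
`b = i`. Moreover `b² = w |b|²` and `k w = i |k|`, so `[Z',Z'] = -2 k b² C = -2 |b|² |k| C'`.
Two real forms differ only in the positive constant `|k| |b|²`, which a positive rescaling of `Z'`
adjusts.
-/

/-- The bracket of the Lie superalgebra `g_k`: even basis `C`, odd basis `Z`,
`[C,C] = [C,Z] = 0`, `[Z,Z] = -2kC`; `(x, z)` stands for `xC + zZ`. -/
def gBr (k : ℂ) (p q : ℂ × ℂ) : ℂ × ℂ := (-2 * k * p.2 * q.2, 0)

open ComplexConjugate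

namespace Complex

theorem mul_conj_eq_self_iff_exists_real_mul {w b z : ℂ} (hb : b ≠ 0) (hwb : w * conj b = b) :
    w * conj z = z ↔ ∃ y : ℝ, z = y * b := by
  have hw : w ≠ 0 := by rintro rfl; simp [eq_comm, hb] at hwb
  constructor
  · intro hwz
    obtain ⟨y, hy⟩ := conj_eq_iff_real.mp <| show conj (z / b) = z / b by
      conv_rhs => rw [← hwz, ← hwb, mul_div_mul_left _ _ hw]
      rw [map_div₀]
    exact ⟨y, by rw [← hy, div_mul_cancel₀ z hb]⟩
  · rintro ⟨y, rfl⟩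
    rw [map_mul, conj_ofReal, mul_left_comm, hwb]

theorem neg_conj_eq_self_iff_exists_real_mul_I {z : ℂ} :
    -conj z = z ↔ ∃ x : ℝ, z = x * I := by
  rw [← neg_one_mul]
  exact mul_conj_eq_self_iff_exists_real_mul I_ne_zero (by simp)

theorem mul_self_eq_mul_norm_sq {w b : ℂ} (hwb : w * conj b = b) : b * b = w * (‖b‖ : ℂ) ^ 2 := by
  rw [← mul_conj', ← mul_assoc, mul_comm w, mul_assoc, mul_comm b, hwb]

theorem mul_I_mul_conj_div_norm {k : ℂ} (hk : k ≠ 0) : k * (I * conj k / ‖k‖) = I * ‖k‖ := by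
  have hnorm : (‖k‖ : ℂ) ≠ 0 := ofReal_ne_zero.mpr (norm_ne_zero_iff.mpr hk)
  field_simp
  exact mul_conj' k

end Complex

theorem Real.exists_pos_mul_sq_eq {a a' : ℝ} (ha : 0 < a) (ha' : 0 < a') :
    ∃ c : ℝ, 0 < c ∧ a' * c ^ 2 = a :=
  ⟨√(a / a'), by positivity, by rw [Real.sq_sqrt (by positivity)]; field_simp⟩

open Complex in
/-- Fix `k ≠ 0` and the antilinear involution `ρ` of `g_k` with `ρ(C) = -C`,
`ρ(Z) = (i k̄/|k|) Z`.  For any `b ≠ 0` with `b/b̄ = i k̄/|k|`: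
the fixed-point set of `ρ` is the real span of `C' = iC` and `Z' = bZ`;
the brackets of the real form are `[C',Z'] = 0` and
`[Z',Z'] = -2|b|²|k| C'`; and any two such real forms (for different
admissible `b'` and `k' ≠ 0`) are isomorphic over `ℝ` (a rescaling
`Z' ↦ c·Z'`, `c > 0`, matches the structure constants). -/
theorem stmt8 (k b : ℂ) (hk : k ≠ 0) (hb : b ≠ 0)
    (hbb : b / (starRingEnd ℂ) b =
      Complex.I * (starRingEnd ℂ) k / (‖k‖ : ℂ)) :
    let ρ : ℂ × ℂ → ℂ × ℂ := fun p =>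
      (-((starRingEnd ℂ) p.1),
        (Complex.I * (starRingEnd ℂ) k / (‖k‖ : ℂ)) *
          (starRingEnd ℂ) p.2)
    ({p : ℂ × ℂ | ρ p = p} =
      {p : ℂ × ℂ | ∃ x y : ℝ, p = ((x : ℂ) * Complex.I, (y : ℂ) * b)}) ∧
    gBr k (Complex.I, 0) ((0 : ℂ), b) = 0 ∧
    gBr k ((0 : ℂ), b) ((0 : ℂ), b) =
      ((-2 * (‖b‖ : ℂ) ^ 2 * (‖k‖ : ℂ)) * Complex.I, 0) ∧
    (∀ k' b' : ℂ, k' ≠ 0 → b' ≠ 0 →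
      b' / (starRingEnd ℂ) b' =
        Complex.I * (starRingEnd ℂ) k' / (‖k'‖ : ℂ) →
      ∃ c : ℝ, 0 < c ∧ ∀ y y' : ℝ,
        -2 * ‖k'‖ * ‖b'‖ ^ 2 * ((c * y) * (c * y')) =
          -2 * ‖k‖ * ‖b‖ ^ 2 * (y * y')) := by
  intro ρ
  have hwb : I * conj k / ‖k‖ * conj b = b := by
    rw [← hbb, div_mul_cancel₀ b (by simpa using hb)]
  refine ⟨?_, by simp [gBr], ?_, ?_⟩
  · ext ⟨x, z⟩
    simp only [Set.mem_ofPred_eq, ρ, Prod.ext_iff, neg_conj_eq_self_iff_exists_real_mul_I,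
      mul_conj_eq_self_iff_exists_real_mul hb hwb, exists_and_right, exists_and_left]
  · simp only [gBr, Prod.mk.injEq, and_true]
    linear_combination
      (-2 * ‖b‖ ^ 2 : ℂ) * mul_I_mul_conj_div_norm hk - 2 * k * mul_self_eq_mul_norm_sq hwb
  · intro k' b' hk' hb' _
    obtain ⟨c, hc, hc2⟩ := Real.exists_pos_mul_sq_eq (a := ‖k‖ * ‖b‖ ^ 2) (a' := ‖k'‖ * ‖b'‖ ^ 2)
      (by positivity) (by positivity)
    exact ⟨c, hc, fun y y' => by linear_combination (-2 * y * y') * hc2⟩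
end

section
/- Let s_k(w,η) = (w̄, u η̄) be a map on T-points of (C^{1|1})^×_k reducing to complex conjugation, with u an invertible even function. Then s_k is a group homomorphism for the product (w,η)·(w',η') = (ww'+kηη', wη'+w'η) if and only if u² = k̄/k; in particular u is a constant complex number of modulus 1, and s_k is then involutive. -/
/-! The conjugation `s_k` always respects the second component of the product, because complex
scalars are central. On the first component, antilinearity of `J` turns `J (k η η')` into
`k̄ J η J η'`, while the product of the images gives `k u² J η J η'`; so `s_k` is multiplicative
exactly when `(k̄ - k u²) J η J η'` vanishes for all odd `η, η'`, and faithfulness turns this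
into `u² = k̄ / k`. Taking norms gives `|u| = 1`, i.e. `u ū = 1`, which makes `s_k` involutive. -/

open ComplexConjugate

lemma norm_eq_one_of_sq_eq_conj_div {k u : ℂ} (hk : k ≠ 0) (h : u ^ 2 = conj k / k) :
    ‖u‖ = 1 := by
  have hsq : ‖u‖ ^ 2 = 1 := by
    rw [← norm_pow, h, norm_div, Complex.norm_conj, div_self (norm_ne_zero_iff.mpr hk)]
  exact (pow_eq_one_iff_of_nonneg (norm_nonneg u) two_ne_zero).mp hsq

section TwistedConj

variable {A : Type*} [Ring A] [Algebra ℂ A]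

/-- The product `(w,η)·(w',η') = (ww' + kηη', wη' + w'η)` on `(ℂ^{1|1})^×_k`. -/
def twistedMul (k : ℂ) (p q : A × A) : A × A :=
  (p.1 * q.1 + algebraMap ℂ A k * (p.2 * q.2), p.1 * q.2 + q.1 * p.2)

/-- The map `s_k (w,η) = (w̄, u η̄)`. -/
def twistedConj (J : A →+* A) (u : ℂ) (p : A × A) : A × A :=
  (J p.1, algebraMap ℂ A u * J p.2)

lemma map_algebraMap_of_antilinear {J : A →+* A}
    (hJanti : ∀ (c : ℂ) (x : A), J (algebraMap ℂ A c * x) = algebraMap ℂ A (conj c) * J x)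
    (c : ℂ) : J (algebraMap ℂ A c) = algebraMap ℂ A (conj c) := by
  simpa using hJanti c 1

lemma twistedConj_twistedMul_eq_iff {J : A →+* A}
    (hJanti : ∀ (c : ℂ) (x : A), J (algebraMap ℂ A c * x) = algebraMap ℂ A (conj c) * J x)
    (k u : ℂ) (p q : A × A) :
    twistedConj J u (twistedMul k p q) = twistedMul k (twistedConj J u p) (twistedConj J u q) ↔
      algebraMap ℂ A (conj k - k * u ^ 2) * (J p.2 * J q.2) = 0 := by
  have hsnd : algebraMap ℂ A u * J (p.1 * q.2 + q.1 * p.2) =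
      J p.1 * (algebraMap ℂ A u * J q.2) + J q.1 * (algebraMap ℂ A u * J p.2) := by
    simp only [map_add, map_mul, mul_add, Algebra.left_comm]
  have hfst : algebraMap ℂ A k * (algebraMap ℂ A u * J p.2 * (algebraMap ℂ A u * J q.2)) =
      algebraMap ℂ A (k * u ^ 2) * (J p.2 * J q.2) := by
    simp only [← Algebra.smul_def, smul_mul_smul_comm, smul_smul]
    ring_nf
  simp only [twistedConj, twistedMul, Prod.mk.injEq]
  rw [hsnd, eq_self, and_true, map_add, map_mul, map_mul, map_mul,
    map_algebraMap_of_antilinear hJanti, hfst, add_right_inj, map_sub, sub_mul, sub_eq_zero]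

lemma twistedConj_twistedConj {J : A →+* A}
    (hJanti : ∀ (c : ℂ) (x : A), J (algebraMap ℂ A c * x) = algebraMap ℂ A (conj c) * J x)
    (hJ2 : ∀ x : A, J (J x) = x) {u : ℂ} (hu : ‖u‖ = 1) (p : A × A) :
    twistedConj J u (twistedConj J u p) = p := by
  have hu_conj : u * conj u = 1 := by
    rw [Complex.mul_conj, Complex.normSq_eq_norm_sq, hu]
    norm_num
  simp only [twistedConj, hJ2, hJanti, ← mul_assoc, ← map_mul, hu_conj, map_one, one_mul]

end TwistedConj

/-- Let `s_k(w,η) = (w̄, u·η̄)` on pairs with entries in a commutative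
superalgebra `A` equipped with a conjugation `J` (an involutive `ℂ`-antilinear
ring morphism), reducing to complex conjugation on scalars, with `u ∈ ℂ`.
Assuming `A` has odd elements whose conjugates multiply faithfully, `s_k` is a
group homomorphism for the product `(w,η)·(w',η') = (ww' + kηη', wη' + w'η)`
if and only if `u² = k̄/k`; in particular `u` then has modulus `1`, and `s_k`
is involutive. -/
theorem stmt11 (k : ℂ) (hk : k ≠ 0) (u : ℂ)
    (A : Type) [Ring A] [Algebra ℂ A]
    (A1 : AddSubgroup A)
    (J : A →+* A)
    (hJanti : ∀ (c : ℂ) (x : A),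
      J (algebraMap ℂ A c * x) = algebraMap ℂ A ((starRingEnd ℂ) c) * J x)
    (hJ2 : ∀ x : A, J (J x) = x)
    (hfaithful : ∃ η ∈ A1, ∃ η' ∈ A1,
      ∀ c : ℂ, algebraMap ℂ A c * (J η * J η') = 0 → c = 0) :
    let kA := algebraMap ℂ A k
    let uA := algebraMap ℂ A u
    let mulP : A × A → A × A → A × A := fun p q =>
      (p.1 * q.1 + kA * (p.2 * q.2), p.1 * q.2 + q.1 * p.2)
    let sk : A × A → A × A := fun p => (J p.1, uA * J p.2)
    ((∀ p q : A × A, p.2 ∈ A1 → q.2 ∈ A1 →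
        sk (mulP p q) = mulP (sk p) (sk q)) ↔
      u ^ 2 = (starRingEnd ℂ) k / k) ∧
    (u ^ 2 = (starRingEnd ℂ) k / k → ‖u‖ = 1) ∧
    (u ^ 2 = (starRingEnd ℂ) k / k → ∀ p : A × A, sk (sk p) = p) := by
  intro kA uA mulP sk
  have hsq_iff : u ^ 2 = conj k / k ↔ conj k - k * u ^ 2 = 0 := by
    rw [eq_div_iff hk, sub_eq_zero, mul_comm, eq_comm]
  refine ⟨⟨fun hmul => ?_, fun hsq p q _ _ => ?_⟩, norm_eq_one_of_sq_eq_conj_div hk,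
    fun hsq => twistedConj_twistedConj hJanti hJ2 (norm_eq_one_of_sq_eq_conj_div hk hsq)⟩
  · obtain ⟨η, hη, η', hη', hfaithful⟩ := hfaithful
    exact hsq_iff.mpr <| hfaithful _ <|
      (twistedConj_twistedMul_eq_iff hJanti k u (0, η) (0, η')).mp (hmul _ _ hη hη')
  · exact (twistedConj_twistedMul_eq_iff hJanti k u p q).mpr <| by
      rw [hsq_iff.mp hsq, map_zero, zero_mul]
end

section
/- The map p(t,τ) = (e^{it}, e^{πi/4} e^{it} τ) is a group homomorphism from the additive supergroup with law (t,τ)·(t',τ') = (t+t'+ττ', τ+τ') to the multiplicative supergroup with law (w,η)·(w',η') = (ww'+ηη', wη'+w'η), and its image satisfies the reality conditions w = (w̄)^{-1}, η = i (w̄)^{-2} η̄ defining S^{1|1}. -/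
/-! Since `t`, `t'` are central and `ττ'` squares to zero,
`e^{i(t+t'+ττ')} = e^{it} e^{it'} (1 + iττ')`. The product of the odd components contributes
`ζ² e^{it} e^{it'} ττ'`, which is exactly the correction term because `ζ = e^{πi/4}` satisfies
`ζ² = i`, while in the odd component the correction dies since `ττ'(τ + τ') = 0`. For the
reality conditions, the conjugation sends `e^{it}` to `e^{-it}` and `ζ = i ζ̄`. -/

open NormedSpace ComplexConjugate

theorem NormedSpace.exp_eq_one_add_of_mul_self_eq_zero {A : Type*} [Ring A] [Algebra ℚ A]
    [TopologicalSpace A] [IsTopologicalRing A] {x : A} (hx : x * x = 0) : exp x = 1 + x := by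
  have hpow : ∀ n, 2 ≤ n → x ^ n = 0 := fun n hn => by
    obtain ⟨m, rfl⟩ := Nat.exists_eq_add_of_le hn
    rw [pow_add, sq, hx, zero_mul]
  rw [exp_eq_tsum ℚ]
  dsimp only
  rw [tsum_eq_sum (s := {0, 1}) fun n hn => by
    rw [hpow n (by simp only [Finset.mem_insert, Finset.mem_singleton] at hn; omega), smul_zero]]
  simp

section Anticommuting

variable {R : Type*} [Ring R] {a b : R}

theorem mul_mul_self_eq_zero_of_anticommute (ha : a * a = 0) (hab : b * a = -(a * b)) :
    (a * b) * (a * b) = 0 := by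
  rw [mul_assoc, ← mul_assoc b, hab, neg_mul, mul_neg, ← mul_assoc, ← mul_assoc, ha, zero_mul,
    zero_mul, neg_zero]

theorem mul_mul_add_eq_zero_of_anticommute (ha : a * a = 0) (hb : b * b = 0)
    (hab : b * a = -(a * b)) : (a * b) * (a + b) = 0 := by
  rw [mul_add, mul_assoc, hab, mul_assoc, hb, mul_neg, ← mul_assoc, ha, zero_mul, neg_zero,
    mul_zero, add_zero]

end Anticommuting

namespace Complex

theorem exp_I_mul_pi_div_four_mul_self :
    exp (I * Real.pi / 4) * exp (I * Real.pi / 4) = I := by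
  rw [← exp_add]
  convert exp_pi_div_two_mul_I using 2
  ring

theorem I_mul_conj_exp_I_mul_pi_div_four :
    I * conj (exp (I * Real.pi / 4)) = exp (I * Real.pi / 4) := by
  nth_rw 1 [← exp_pi_div_two_mul_I]
  rw [← exp_conj, ← exp_add]
  congr 1
  simp only [map_div₀, map_mul, conj_I, conj_ofReal, map_ofNat]
  ring

end Complex

section SuperCircle

variable {A : Type*} [NormedRing A] [NormedAlgebra ℂ A]

noncomputable def superExp (ζ : ℂ) (s σ : A) : A × A :=
  (exp (algebraMap ℂ A Complex.I * s), algebraMap ℂ A ζ * exp (algebraMap ℂ A Complex.I * s) * σ)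

theorem commute_algebraMap_I_mul {s : A} (hs : ∀ x, Commute s x) (x : A) :
    Commute (algebraMap ℂ A Complex.I * s) x :=
  (Algebra.commute_algebraMap_left _ x).mul_left (hs x)

variable [NormedAlgebra ℚ A] [CompleteSpace A]

theorem exp_I_mul_add_add_mul {t t' τ τ' : A} (ht : ∀ x, Commute t x) (ht' : ∀ x, Commute t' x)
    (hτ : τ * τ = 0) (hττ' : τ' * τ = -(τ * τ')) :
    exp (algebraMap ℂ A Complex.I * (t + t' + τ * τ')) =
      exp (algebraMap ℂ A Complex.I * t) * exp (algebraMap ℂ A Complex.I * t') *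
        (1 + Complex.I • (τ * τ')) := by
  have hi := commute_algebraMap_I_mul ht
  have hν : (Complex.I • (τ * τ')) * (Complex.I • (τ * τ')) = 0 := by
    rw [smul_mul_smul_comm, mul_mul_self_eq_zero_of_anticommute hτ hττ', smul_zero]
  rw [mul_add _ (t + t'), mul_add _ t, ← Algebra.smul_def Complex.I (τ * τ'),
    exp_add_of_commute ((hi _).add_left (commute_algebraMap_I_mul ht' _)),
    exp_add_of_commute (hi _), exp_eq_one_add_of_mul_self_eq_zero hν]

theorem superExp_add_add_mul {ζ : ℂ} (hζ : ζ * ζ = Complex.I) {t t' τ τ' : A}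
    (ht : ∀ x, Commute t x) (ht' : ∀ x, Commute t' x) (hτ : τ * τ = 0) (hτ' : τ' * τ' = 0)
    (hττ' : τ' * τ = -(τ * τ')) :
    superExp ζ (t + t' + τ * τ') (τ + τ') =
      ((superExp ζ t τ).1 * (superExp ζ t' τ').1 + (superExp ζ t τ).2 * (superExp ζ t' τ').2,
       (superExp ζ t τ).1 * (superExp ζ t' τ').2 + (superExp ζ t' τ').1 * (superExp ζ t τ).2) := by
  have hE' x := (commute_algebraMap_I_mul ht' x).exp_left
  simp only [superExp, exp_I_mul_add_add_mul ht ht' hτ hττ']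
  set E := exp (algebraMap ℂ A Complex.I * t)
  set E' := exp (algebraMap ℂ A Complex.I * t')
  simp only [← Algebra.smul_def]
  refine Prod.ext ?_ ?_
  · simp only [mul_add, mul_one, mul_smul_comm, smul_mul_assoc, smul_smul, hζ, mul_assoc,
      (hE' τ).symm.left_comm]
  · calc ζ • (E * E' * (1 + Complex.I • (τ * τ'))) * (τ + τ')
        = ζ • (E * E' * (τ + τ')) + (ζ * Complex.I) • (E * E' * ((τ * τ') * (τ + τ'))) := by
          simp only [mul_add, mul_one, add_mul, smul_mul_assoc, mul_smul_comm, smul_smul,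
            smul_add, mul_assoc]
          abel
      _ = E * (ζ • E' * τ') + E' * (ζ • E * τ) := by
          rw [mul_mul_add_eq_zero_of_anticommute hτ hτ' hττ', mul_zero, smul_zero, add_zero,
            mul_add, smul_add, add_comm]
          simp only [smul_mul_assoc, mul_smul_comm, mul_assoc, (hE' E).left_comm]

theorem map_exp_I_mul_of_conj {J : A →+* A}
    (hJ : ∀ (c : ℂ) (x : A), J (algebraMap ℂ A c * x) = algebraMap ℂ A (conj c) * J x)
    (hJc : Continuous J) {t : A} (hJt : J t = t) :
    J (exp (algebraMap ℂ A Complex.I * t)) = exp (-(algebraMap ℂ A Complex.I * t)) := by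
  rw [map_exp J hJc, hJ, hJt, Complex.conj_I, map_neg, neg_mul]

theorem superExp_fst_eq_inverse_map {J : A →+* A}
    (hJ : ∀ (c : ℂ) (x : A), J (algebraMap ℂ A c * x) = algebraMap ℂ A (conj c) * J x)
    (hJc : Continuous J) (ζ : ℂ) {t : A} (hJt : J t = t) (τ : A) :
    (superExp ζ t τ).1 = Ring.inverse (J (superExp ζ t τ).1) := by
  rw [superExp, map_exp_I_mul_of_conj hJ hJc hJt, Ring.inverse_exp, neg_neg]

theorem superExp_snd_eq_of_conj {J : A →+* A}
    (hJ : ∀ (c : ℂ) (x : A), J (algebraMap ℂ A c * x) = algebraMap ℂ A (conj c) * J x)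
    (hJc : Continuous J) {ζ : ℂ} (hζ : Complex.I * conj ζ = ζ) {t τ : A} (hJt : J t = t)
    (hJτ : J τ = τ) :
    (superExp ζ t τ).2 = algebraMap ℂ A Complex.I *
      (Ring.inverse (J (superExp ζ t τ).1) * Ring.inverse (J (superExp ζ t τ).1)) *
        J (superExp ζ t τ).2 := by
  rw [← superExp_fst_eq_inverse_map hJ hJc ζ hJt τ]
  simp only [superExp]
  rw [mul_assoc _ _ τ, hJ, map_mul, map_exp_I_mul_of_conj hJ hJc hJt, hJτ]
  have hinv : exp (algebraMap ℂ A Complex.I * t) * exp (-(algebraMap ℂ A Complex.I * t)) = 1 := by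
    rw [← exp_add_of_commute (Commute.refl _).neg_right, add_neg_cancel, exp_zero]
  set E := exp (algebraMap ℂ A Complex.I * t)
  set F := exp (-(algebraMap ℂ A Complex.I * t))
  simp only [← Algebra.smul_def, smul_mul_assoc, mul_smul_comm, smul_smul, mul_assoc]
  rw [mul_comm _ Complex.I, hζ, ← mul_assoc E F τ, hinv, one_mul]

end SuperCircle

theorem stmt13_general (A : Type) [NormedRing A] [NormedAlgebra ℂ A] [CompleteSpace A]
    (A0 A1 : AddSubgroup A)
    (hcentral : ∀ a ∈ A0, ∀ x : A, a * x = x * a)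
    (hanti : ∀ a ∈ A1, ∀ b ∈ A1, a * b = -(b * a))
    (J : A →+* A)
    (hJanti : ∀ (c : ℂ) (x : A),
      J (algebraMap ℂ A c * x) = algebraMap ℂ A ((starRingEnd ℂ) c) * J x)
    (hJcont : Continuous J)
    (t τ t' τ' : A)
    (ht : t ∈ A0) (hτ : τ ∈ A1) (ht' : t' ∈ A0) (hτ' : τ' ∈ A1)
    (hJt : J t = t) (hJτ : J τ = τ) :
    let i := algebraMap ℂ A Complex.I
    let c := algebraMap ℂ A (Complex.exp (Complex.I * Real.pi / 4))
    let p : A → A → A × A := fun s σ =>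
      (NormedSpace.exp (i * s), c * NormedSpace.exp (i * s) * σ)
    (p (t + t' + τ * τ') (τ + τ') =
      ((p t τ).1 * (p t' τ').1 + (p t τ).2 * (p t' τ').2,
       (p t τ).1 * (p t' τ').2 + (p t' τ').1 * (p t τ).2)) ∧
    ((p t τ).1 = Ring.inverse (J (p t τ).1)) ∧
    ((p t τ).2 =
      i * (Ring.inverse (J (p t τ).1) * Ring.inverse (J (p t τ).1)) *
        J ((p t τ).2)) := by
  intro i c p
  let _ : NormedAlgebra ℚ A := NormedAlgebra.restrictScalars ℚ ℂ A
  have := IsAddTorsionFree.of_module_rat A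
  have hsq : ∀ σ ∈ A1, σ * σ = 0 := fun σ hσ => self_eq_neg.mp (hanti σ hσ σ hσ)
  exact ⟨superExp_add_add_mul Complex.exp_I_mul_pi_div_four_mul_self (hcentral t ht)
      (hcentral t' ht') (hsq τ hτ) (hsq τ' hτ') (hanti τ' hτ' τ hτ),
    superExp_fst_eq_inverse_map hJanti hJcont _ hJt τ,
    superExp_snd_eq_of_conj hJanti hJcont Complex.I_mul_conj_exp_I_mul_pi_div_four hJt hJτ⟩

/-- In a (complete normed) commutative superalgebra `A` over `ℂ` with
conjugation `J`, the map `p(t,τ) = (e^{it}, e^{πi/4} e^{it} τ)` is a group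
homomorphism from the additive supergroup `ℝ^{1|1}` with law
`(t,τ)·(t',τ') = (t+t'+ττ', τ+τ')` (on real points: `t` even, `τ` odd, both
fixed by `J`) to the multiplicative supergroup with law
`(w,η)·(w',η') = (ww'+ηη', wη'+w'η)`, and its image satisfies the reality
conditions `w = (w̄)⁻¹`, `η = i (w̄)⁻² η̄` defining `S^{1|1}`. -/
theorem stmt13 (A : Type) [NormedRing A] [NormedAlgebra ℂ A] [CompleteSpace A]
    (A0 A1 : AddSubgroup A)
    (h00 : ∀ a ∈ A0, ∀ b ∈ A0, a * b ∈ A0)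
    (h01 : ∀ a ∈ A0, ∀ b ∈ A1, a * b ∈ A1)
    (h11 : ∀ a ∈ A1, ∀ b ∈ A1, a * b ∈ A0)
    (hone : (1 : A) ∈ A0)
    (hcentral : ∀ a ∈ A0, ∀ x : A, a * x = x * a)
    (hanti : ∀ a ∈ A1, ∀ b ∈ A1, a * b = -(b * a))
    (J : A →+* A)
    (hJanti : ∀ (c : ℂ) (x : A),
      J (algebraMap ℂ A c * x) = algebraMap ℂ A ((starRingEnd ℂ) c) * J x)
    (hJ2 : ∀ x : A, J (J x) = x)
    (hJcont : Continuous J)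
    (t τ t' τ' : A)
    (ht : t ∈ A0) (hτ : τ ∈ A1) (ht' : t' ∈ A0) (hτ' : τ' ∈ A1)
    (hJt : J t = t) (hJτ : J τ = τ) (hJt' : J t' = t') (hJτ' : J τ' = τ') :
    let i := algebraMap ℂ A Complex.I
    let c := algebraMap ℂ A (Complex.exp (Complex.I * Real.pi / 4))
    let p : A → A → A × A := fun s σ =>
      (NormedSpace.exp (i * s), c * NormedSpace.exp (i * s) * σ)
    (p (t + t' + τ * τ') (τ + τ') =
      ((p t τ).1 * (p t' τ').1 + (p t τ).2 * (p t' τ').2,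
       (p t τ).1 * (p t' τ').2 + (p t' τ').1 * (p t τ).2)) ∧
    ((p t τ).1 = Ring.inverse (J (p t τ).1)) ∧
    ((p t τ).2 =
      i * (Ring.inverse (J (p t τ).1) * Ring.inverse (J (p t τ).1)) *
        J ((p t τ).2)) :=
  stmt13_general A A0 A1 hcentral hanti J hJanti hJcont t τ t' τ' ht hτ ht' hτ' hJt hJτ
end
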